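/- arXiv:2510.00073 — 2 statements merged into one kernel-verified Lean document; each statement's English description precedes it below -/
import Mathlib

section
/- Let Δ_m : ℝ^d → ℝ satisfy |Δ_m(b)| ≤ ε_m for all b. Let a ∈ ℝ^d, let b_1, …, b_n ∈ ℝ^d with nonnegative integer counts T(b_k), let T = Σ_k T(b_k), and let V = Σ_k T(b_k) b_k b_kᵀ be invertible with ‖a‖²_{V⁻¹} ≤ d/T. Then |aᵀ V⁻¹ Σ_k T(b_k) Δ_m(b_k) b_k| ≤ ε_m √d. -/
open Matrix

theorem quadform_sum_aux {d n : ℕ} (u : Fin d → ℝ) (b : Fin n → Fin d → ℝ) (T : Fin n → ℕ)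
    (V : Matrix (Fin d) (Fin d) ℝ)
    (hVdef : V = ∑ k, (T k : ℝ) • vecMulVec (b k) (b k)) :
    u ⬝ᵥ (V *ᵥ u) = ∑ k, (T k : ℝ) * (u ⬝ᵥ b k)^2 := by
  rw [hVdef]
  simp only [mulVec, dotProduct, Matrix.sum_apply, Matrix.smul_apply, vecMulVec_apply,
    smul_eq_mul, Finset.mul_sum, Finset.sum_mul, sq]
  calc (∑ x : Fin d, ∑ y : Fin d, ∑ i : Fin n, u x * (↑(T i) * (b i x * b i y) * u y))
      = ∑ x : Fin d, ∑ i : Fin n, ∑ y : Fin d, u x * (↑(T i) * (b i x * b i y) * u y) :=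
        Finset.sum_congr rfl fun x _ => Finset.sum_comm
    _ = ∑ i : Fin n, ∑ x : Fin d, ∑ y : Fin d, u x * (↑(T i) * (b i x * b i y) * u y) :=
        Finset.sum_comm
    _ = ∑ k : Fin n, ∑ y : Fin d, ∑ i : Fin d, ↑(T k) * (u i * b k i * (u y * b k y)) :=
        Finset.sum_congr rfl fun k _ => by
          rw [Finset.sum_comm]
          exact Finset.sum_congr rfl fun y _ => Finset.sum_congr rfl fun x _ => by ring

/-- Bias bound under misspecification with G-optimal design: if `|Δm(b)| ≤ εm` for all `b`,
`V = Σ_k T(b_k) b_k b_kᵀ` is invertible and `‖a‖²_{V⁻¹} ≤ d / Σ_k T(b_k)`, then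
`|aᵀ V⁻¹ Σ_k T(b_k) Δm(b_k) b_k| ≤ εm √d`. -/
theorem misspecification_bias_bound {d n : ℕ} (Δm : (Fin d → ℝ) → ℝ) (εm : ℝ)
    (hΔ : ∀ v, |Δm v| ≤ εm)
    (a : Fin d → ℝ) (b : Fin n → Fin d → ℝ) (T : Fin n → ℕ)
    (V : Matrix (Fin d) (Fin d) ℝ)
    (hVdef : V = ∑ k, (T k : ℝ) • vecMulVec (b k) (b k))
    (hVinv : IsUnit V)
    (hGopt : a ⬝ᵥ (V⁻¹ *ᵥ a) ≤ (d : ℝ) / (∑ k, (T k : ℝ))) :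
    |a ⬝ᵥ (V⁻¹ *ᵥ ∑ k, ((T k : ℝ) * Δm (b k)) • b k)| ≤ εm * Real.sqrt d := by
  have hεm : 0 ≤ εm := (abs_nonneg _).trans (hΔ fun _ => 0)
  set u : Fin d → ℝ := V⁻¹ *ᵥ a with hu
  set c : Fin n → ℝ := fun k => u ⬝ᵥ b k with hc
  have hVsymm : Vᵀ = V := by
    ext i j
    simp only [hVdef, Matrix.transpose_apply, Matrix.sum_apply, Matrix.smul_apply,
      vecMulVec_apply, smul_eq_mul]
    exact Finset.sum_congr rfl fun k _ => by ring
  have hvm : a ᵥ* V⁻¹ = u := by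
    rw [hu, ← Matrix.vecMul_transpose, Matrix.transpose_nonsing_inv, hVsymm]
  have hrw : a ⬝ᵥ (V⁻¹ *ᵥ ∑ k, ((T k : ℝ) * Δm (b k)) • b k)
      = ∑ k, (T k : ℝ) * Δm (b k) * c k := by
    rw [Matrix.dotProduct_mulVec, hvm]
    simp only [dotProduct, Finset.sum_apply, Pi.smul_apply, smul_eq_mul, hc, Finset.mul_sum]
    rw [Finset.sum_comm]
    exact Finset.sum_congr rfl fun k _ => Finset.sum_congr rfl fun i _ => by ring
  have hdet : IsUnit V.det := (Matrix.isUnit_iff_isUnit_det V).mp hVinv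
  have hVu : V *ᵥ u = a := by
    rw [hu, Matrix.mulVec_mulVec, Matrix.mul_nonsing_inv V hdet, Matrix.one_mulVec]
  have hS : ∑ k, (T k : ℝ) * (c k)^2 = a ⬝ᵥ (V⁻¹ *ᵥ a) := by
    rw [← quadform_sum_aux u b T V hVdef, hVu, dotProduct_comm]
  set Tn : ℝ := ∑ k, (T k : ℝ) with hTn
  have hTnn : 0 ≤ Tn := Finset.sum_nonneg fun k _ => Nat.cast_nonneg _
  -- Cauchy–Schwarz
  have hCS : (∑ k, (T k : ℝ) * |c k|) ^ 2 ≤ Tn * ∑ k, (T k : ℝ) * (c k)^2 := by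
    refine Finset.sum_sq_le_sum_mul_sum_of_sq_eq_mul _ (fun k _ => Nat.cast_nonneg _)
      (fun k _ => mul_nonneg (Nat.cast_nonneg _) (sq_nonneg _)) (fun k _ => ?_)
    rw [mul_pow, sq_abs]
    ring
  have hTS : Tn * ∑ k, (T k : ℝ) * (c k)^2 ≤ (d : ℝ) := by
    rcases hTnn.eq_or_lt with h | h
    · rw [← h, zero_mul]; exact Nat.cast_nonneg _
    · calc Tn * ∑ k, (T k : ℝ) * (c k)^2 ≤ Tn * ((d : ℝ) / Tn) := by
            exact mul_le_mul_of_nonneg_left (hS ▸ hGopt) hTnn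
        _ = (d : ℝ) := mul_div_cancel₀ _ h.ne'
  have hsum_abs : ∑ k, (T k : ℝ) * |c k| ≤ Real.sqrt d := by
    have h0 : 0 ≤ ∑ k, (T k : ℝ) * |c k| :=
      Finset.sum_nonneg fun k _ => mul_nonneg (Nat.cast_nonneg _) (abs_nonneg _)
    have := Real.sqrt_le_sqrt (hCS.trans hTS)
    rwa [Real.sqrt_sq h0] at this
  rw [hrw]
  calc |∑ k, (T k : ℝ) * Δm (b k) * c k| ≤ ∑ k, |(T k : ℝ) * Δm (b k) * c k| :=
        Finset.abs_sum_le_sum_abs _ _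
    _ ≤ ∑ k, εm * ((T k : ℝ) * |c k|) := by
        refine Finset.sum_le_sum fun k _ => ?_
        rw [abs_mul, abs_mul, Nat.abs_cast]
        calc (T k : ℝ) * |Δm (b k)| * |c k| ≤ (T k : ℝ) * εm * |c k| := by
              exact mul_le_mul_of_nonneg_right
                (mul_le_mul_of_nonneg_left (hΔ (b k)) (Nat.cast_nonneg _)) (abs_nonneg _)
          _ = εm * ((T k : ℝ) * |c k|) := by ring
    _ = εm * ∑ k, (T k : ℝ) * |c k| := by rw [Finset.mul_sum]
    _ ≤ εm * Real.sqrt d := mul_le_mul_of_nonneg_left hsum_abs hεm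
end

section
/- Let Ψ ∈ ℝ^{K×d} be a feature matrix, N ∈ ℕ^K sample counts with diagonal matrix D_N, V = ΨᵀD_NΨ invertible, and Δ ∈ ℝ^K with ‖Δ‖_∞ ≤ ε_m. Define θ' = θ + V⁻¹ Ψᵀ D_N Δ. Then ‖θ' − θ‖_V ≤ ε_m √(Σ_i N_i). -/
open Matrix

/-- Orthogonal parameterization distance bound: with `V = Ψᵀ D_N Ψ` invertible,
`‖Δ‖_∞ ≤ εm`, and `θ' = θ + V⁻¹ Ψᵀ D_N Δ`, one has `‖θ' - θ‖_V ≤ εm √(Σᵢ Nᵢ)`. -/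
theorem orthogonal_param_dist_bound {K d : ℕ} (Ψ : Matrix (Fin K) (Fin d) ℝ)
    (N : Fin K → ℕ) (θ : Fin d → ℝ) (Δ : Fin K → ℝ) (εm : ℝ)
    (hΔ : ∀ i, |Δ i| ≤ εm)
    (V : Matrix (Fin d) (Fin d) ℝ)
    (hVdef : V = Ψᵀ * Matrix.diagonal (fun i => (N i : ℝ)) * Ψ)
    (hVinv : IsUnit V) :
    Real.sqrt
        (((θ + V⁻¹ *ᵥ (Ψᵀ *ᵥ (Matrix.diagonal (fun i => (N i : ℝ)) *ᵥ Δ))) - θ) ⬝ᵥ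
          (V *ᵥ ((θ + V⁻¹ *ᵥ (Ψᵀ *ᵥ (Matrix.diagonal (fun i => (N i : ℝ)) *ᵥ Δ))) - θ)))
      ≤ εm * Real.sqrt (∑ i, (N i : ℝ)) := by
  set D := Matrix.diagonal (fun i => (N i : ℝ)) with hD
  set w := Ψᵀ *ᵥ (D *ᵥ Δ) with hw
  set x := V⁻¹ *ᵥ w with hx
  have hθ : θ + x - θ = x := by abel
  rw [hθ]
  have hVx : V *ᵥ x = w := by
    rw [hx, Matrix.mulVec_mulVec, Matrix.mul_nonsing_inv _ ((Matrix.isUnit_iff_isUnit_det V).mp hVinv), Matrix.one_mulVec]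
  set u := Ψ *ᵥ x with hu
  -- s = x ⬝ᵥ w = Σ N i * Δ i * u i
  have hs1 : x ⬝ᵥ (V *ᵥ x) = ∑ i, (N i : ℝ) * Δ i * u i := by
    rw [hVx, hw, Matrix.dotProduct_mulVec, Matrix.vecMul_transpose, ← hu]
    simp only [dotProduct, hD, Matrix.mulVec_diagonal]
    apply Finset.sum_congr rfl; intro i _; ring
  have hs2 : x ⬝ᵥ (V *ᵥ x) = ∑ i, (N i : ℝ) * u i ^ 2 := by
    rw [hVdef, ← Matrix.mulVec_mulVec, ← Matrix.mulVec_mulVec,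
      Matrix.dotProduct_mulVec, Matrix.vecMul_transpose, ← hu]
    simp only [dotProduct, hD, Matrix.mulVec_diagonal]
    apply Finset.sum_congr rfl; intro i _; ring
  set s := x ⬝ᵥ (V *ᵥ x) with hsdef
  have hs_nonneg : 0 ≤ s := by
    rw [hs2]
    exact Finset.sum_nonneg fun i _ => mul_nonneg (Nat.cast_nonneg _) (sq_nonneg _)
  have hA_nonneg : (0:ℝ) ≤ ∑ i, (N i : ℝ) * Δ i ^ 2 :=
    Finset.sum_nonneg fun i _ => mul_nonneg (Nat.cast_nonneg _) (sq_nonneg _)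
  -- Cauchy-Schwarz: s^2 ≤ (Σ N Δ²) * s
  have hcs : s ^ 2 ≤ (∑ i, (N i : ℝ) * Δ i ^ 2) * s := by
    have := Finset.sum_mul_sq_le_sq_mul_sq Finset.univ
      (fun i => Real.sqrt (N i) * Δ i) (fun i => Real.sqrt (N i) * u i)
    calc s ^ 2 = (∑ i, (Real.sqrt (N i) * Δ i) * (Real.sqrt (N i) * u i)) ^ 2 := by
          rw [hs1]; congr 1; apply Finset.sum_congr rfl; intro i _
          rw [show Real.sqrt (N i) * Δ i * (Real.sqrt (N i) * u i)
            = (Real.sqrt (N i) * Real.sqrt (N i)) * Δ i * u i by ring,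
            Real.mul_self_sqrt (Nat.cast_nonneg _)]
      _ ≤ (∑ i, (Real.sqrt (N i) * Δ i) ^ 2) * ∑ i, (Real.sqrt (N i) * u i) ^ 2 := this
      _ = (∑ i, (N i : ℝ) * Δ i ^ 2) * s := by
          rw [hs2]
          congr 1
          · apply Finset.sum_congr rfl; intro i _
            rw [mul_pow, Real.sq_sqrt (Nat.cast_nonneg _)]
          · apply Finset.sum_congr rfl; intro i _
            rw [mul_pow, Real.sq_sqrt (Nat.cast_nonneg _)]
  have hsA : s ≤ ∑ i, (N i : ℝ) * Δ i ^ 2 := by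
    rcases eq_or_lt_of_le hs_nonneg with h | h
    · rw [← h]; exact hA_nonneg
    · have := hcs
      rw [sq] at this
      exact le_of_mul_le_mul_right this h
  have hAbound : (∑ i, (N i : ℝ) * Δ i ^ 2) ≤ εm ^ 2 * ∑ i, (N i : ℝ) := by
    rw [Finset.mul_sum]
    apply Finset.sum_le_sum
    intro i _
    rw [mul_comm (εm^2)]
    apply mul_le_mul_of_nonneg_left _ (Nat.cast_nonneg _)
    calc Δ i ^ 2 = |Δ i| ^ 2 := (sq_abs _).symm
      _ ≤ εm ^ 2 := by
          apply pow_le_pow_left₀ (abs_nonneg _) (hΔ i)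
  rcases Nat.eq_zero_or_pos K with hK | hK
  · subst hK
    have hs0 : s = 0 := by rw [hs1]; simp
    rw [hs0]
    simp
  · have hε : 0 ≤ εm := le_trans (abs_nonneg _) (hΔ ⟨0, hK⟩)
    calc Real.sqrt s ≤ Real.sqrt (εm ^ 2 * ∑ i, (N i : ℝ)) :=
          Real.sqrt_le_sqrt (le_trans hsA hAbound)
      _ = εm * Real.sqrt (∑ i, (N i : ℝ)) := by
          rw [Real.sqrt_mul (sq_nonneg _), Real.sqrt_sq hε]
end
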